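/- Suppose θ_{x₁} = τ_{q,x₁} and let ν ∈ ℤ. Let f ∈ F(x̂₁)[x₁,x₁^{−1}] be a Laurent polynomial written as f = q^{−ν}·τ_{q,x₁}(g) − g + f_ν for some g ∈ F(x̂₁)[x₁,x₁^{−1}] and f_ν ∈ W_ν, and let c₂,…,cₙ ∈ F be nonzero with θ̃_{x_i} = c_i·θ_{x_i}. Then f is (q^{−ν}τ_{q,x₁}, θ̃_{x₂},…,θ̃_{xₙ})-summable in F(x) if and only if f_ν is (θ̃_{x₂},…,θ̃_{xₙ})-summable in F(x). -/

import Mathlib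

noncomputable section

/-- The field of rational functions `F(x₁,…,xₙ)`, modeled as the fraction field of the
multivariate polynomial ring. -/
abbrev MvRat (F : Type*) [Field F] (n : ℕ) := FractionRing (MvPolynomial (Fin n) F)

/-- The image of the variable `xᵢ` in `F(x₁,…,xₙ)`. -/
def xv {F : Type*} [Field F] {n : ℕ} (i : Fin n) : MvRat F n :=
  algebraMap (MvPolynomial (Fin n) F) (MvRat F n) (MvPolynomial.X i)

/-- The subfield `F(x₂,…,xₙ)` of `F(x₁,…,xₙ)` (the variable `x₁` has index `0`). -/
def hatField (F : Type*) [Field F] (n : ℕ) [NeZero n] : Subfield (MvRat F n) :=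
  Subfield.closure (Set.range (algebraMap F (MvRat F n)) ∪ (xv '' {i : Fin n | i ≠ 0}))

/-- `a` is a polynomial in `x1` over the subfield `E` of degree `< D`. -/
def IsPolyDeg {L : Type*} [Field L] (E : Subfield L) (x1 : L) (D : ℕ) (a : L) : Prop :=
  ∃ cf : Fin D → E, a = ∑ k : Fin D, (cf k : L) * x1 ^ (k : ℕ)

/-- `a` is a polynomial in `x1` over the subfield `E`, i.e. `a ∈ E[x1]`. -/
def IsPolyE {L : Type*} [Field L] (E : Subfield L) (x1 a : L) : Prop :=
  ∃ D : ℕ, IsPolyDeg E x1 D a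

/-- `a` is a Laurent polynomial in `x1` over the subfield `E`, i.e. `a ∈ E[x1, x1⁻¹]`. -/
def IsLaurent {L : Type*} [Field L] (E : Subfield L) (x1 a : L) : Prop :=
  ∃ (s : Finset ℤ) (cf : ℤ → L), (∀ k ∈ s, cf k ∈ E) ∧ a = ∑ k ∈ s, cf k * x1 ^ k

/-- For a family `θ` of `F`-automorphisms and an exponent vector `α`,
the product `∏ i, θᵢ^(αᵢ)` (the element `θ_x^α` of the group generated by the `θᵢ`). -/
def thetaPowS {F L : Type*} [CommSemiring F] [Semiring L] [Algebra F L] {ι : Type*} [Fintype ι]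
    (θ : ι → (L ≃ₐ[F] L)) (α : ι → ℤ) : L ≃ₐ[F] L :=
  (Finset.univ.toList.map fun i => θ i ^ α i).prod

/-- Membership in the space `V_{[d]_G,j}`: `f` is a finite sum of fractions `a_g / g(d)^j`
with `g` in the group `G` and `a_g ∈ E[x₁]` of degree `< D` (`= deg_{x₁} d`). -/
def MemV {F L : Type*} [Field F] [Field L] [Algebra F L] (G : Set (L ≃ₐ[F] L))
    (E : Subfield L) (x1 : L) (dd : L) (D j : ℕ) (f : L) : Prop :=
  ∃ s : Finset (L ≃ₐ[F] L), ↑s ⊆ G ∧ ∃ a : (L ≃ₐ[F] L) → L,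
    (∀ g ∈ s, IsPolyDeg E x1 D (a g)) ∧ f = ∑ g ∈ s, a g / (g dd) ^ j

/-- `p` and `p'` are `G`-equivalent: `p = c · g(p')` for some nonzero `c ∈ F` and `g ∈ G`. -/
def GEquivSet {F L : Type*} [Field F] [Field L] [Algebra F L] (G : Set (L ≃ₐ[F] L))
    (p p' : L) : Prop :=
  ∃ c : F, c ≠ 0 ∧ ∃ g ∈ G, p = algebraMap F L c * g p'

/-- `w` divides `p` inside the ring `E[x1]`. -/
def DvdE {L : Type*} [Field L] (E : Subfield L) (x1 w p : L) : Prop :=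
  ∃ u : L, IsPolyE E x1 u ∧ p = w * u

/-- `p ∈ E[x₁]` is normal w.r.t. `θ1`: `gcd(p, θ1^ℓ(p)) = 1` for all nonzero `ℓ ∈ ℤ`,
i.e. every common divisor (in `E[x₁]`) of `p` and `θ1^ℓ(p)` is a unit (lies in `E`). -/
def NormalWrt {F L : Type*} [Field F] [Field L] [Algebra F L] (E : Subfield L) (x1 : L)
    (θ1 : L ≃ₐ[F] L) (p : L) : Prop :=
  ∀ ℓ : ℤ, ℓ ≠ 0 → ∀ w : L, IsPolyE E x1 w →
    DvdE E x1 w p → DvdE E x1 w ((θ1 ^ ℓ) p) → w ∈ E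

/-- The isotropy group of `p` (in exponent-vector coordinates): the subgroup of `ℤ^ι`
of all `α` with `Θ(α)(p) = c·p` for some nonzero `c ∈ F`. -/
def isotropyZ {F L : Type*} [Field F] [Field L] [Algebra F L] {ι : Type*}
    (Θ : (ι → ℤ) → (L ≃ₐ[F] L))
    (hadd : ∀ α β, Θ (α + β) = Θ α * Θ β) (h0 : Θ 0 = 1) (p : L) :
    AddSubgroup (ι → ℤ) where
  carrier := {α | ∃ c : F, c ≠ 0 ∧ Θ α p = algebraMap F L c * p}
  zero_mem' := ⟨1, one_ne_zero, by simp [h0]⟩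
  add_mem' := by
    rintro α β ⟨c, hc, hcp⟩ ⟨e, he, hep⟩
    refine ⟨e * c, mul_ne_zero he hc, ?_⟩
    rw [hadd, AlgEquiv.mul_apply, hep, map_mul, AlgEquiv.commutes, hcp, map_mul]
    ring
  neg_mem' := by
    rintro α ⟨c, hc, hcp⟩
    refine ⟨c⁻¹, inv_ne_zero hc, ?_⟩
    have h1 : Θ (-α) (Θ α p) = p := by
      rw [← AlgEquiv.mul_apply, ← hadd, neg_add_cancel, h0, AlgEquiv.one_apply]
    rw [hcp, map_mul, AlgEquiv.commutes] at h1
    have hc0 : (algebraMap F L) c ≠ 0 :=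
      (map_ne_zero_iff _ (algebraMap F L).injective).mpr hc
    rw [map_inv₀, eq_inv_mul_iff_mul_eq₀ hc0]
    exact h1

end

/-!
Expand every rational function as a Laurent series in `x₁` whose coefficients are rational
functions in `x₂, …, xₙ`, and let `[x₁^ν]` be the coefficient of `x₁ ^ ν`. It is additive, and:
`τ_{q,x₁}` multiplies the `j`-th coefficient by `q ^ j`, so `[x₁^ν]` kills every
`q^{-ν} τ_{q,x₁}(u) - u`; the other operators fix `x₁` and act coefficientwise, so `[x₁^ν]`
commutes with `cᵢ θ_{xᵢ} - 1`; and `[x₁^ν](h x₁^ν) = h` for `h ∈ F(x̂₁)`. Applying `[x₁^ν]` to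
a summability certificate of `f` and multiplying back by `x₁ ^ ν` gives one of `f_ν`.
The converse is immediate from the decomposition of `f`.
-/

noncomputable section

namespace HahnSeries

variable {Γ R S : Type*} [PartialOrder Γ] [AddCommMonoid Γ] [IsOrderedCancelAddMonoid Γ]

def mapRingHom [Semiring R] [Semiring S] (f : R →+* S) : HahnSeries Γ R →+* HahnSeries Γ S where
  toFun x := x.map f
  map_one' := HahnSeries.map_one f.toMonoidWithZeroHom
  map_mul' _ _ := HahnSeries.map_mul f.toNonUnitalRingHom
  map_zero' := HahnSeries.map_zero f.toAddMonoidHom.toZeroHom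
  map_add' _ _ := HahnSeries.map_add f.toAddMonoidHom

@[simp]
theorem coeff_mapRingHom [Semiring R] [Semiring S] (f : R →+* S) (x : HahnSeries Γ R) (a : Γ) :
    (mapRingHom f x).coeff a = f (x.coeff a) :=
  rfl

theorem mapRingHom_single [Semiring R] [Semiring S] (f : R →+* S) (a : Γ) (r : R) :
    mapRingHom f (single a r) = single a (f r) :=
  HahnSeries.map_single (f : ZeroHom R S)

section Rescale

variable [CommSemiring R]

def rescaleFun (c : Rˣ) (x : HahnSeries ℤ R) : HahnSeries ℤ R where
  coeff j := ((c ^ j : Rˣ) : R) * x.coeff j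
  isPWO_support' := x.isPWO_support.mono fun j hj h => hj (by simp only [h, mul_zero])

theorem support_rescaleFun (c : Rˣ) (x : HahnSeries ℤ R) :
    (rescaleFun c x).support = x.support := by
  ext j
  simp [rescaleFun, mem_support, Units.mul_right_eq_zero]

def rescale (c : Rˣ) : HahnSeries ℤ R →+* HahnSeries ℤ R where
  toFun := rescaleFun c
  map_one' := by
    ext j
    by_cases h : j = 0 <;> simp [rescaleFun, coeff_one, h]
  map_mul' x y := by
    ext a
    have hA : Finset.antidiagonal (rescaleFun c x).isPWO_support
        (rescaleFun c y).isPWO_support a =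
        Finset.antidiagonal x.isPWO_support y.isPWO_support a := by
      simp only [support_rescaleFun]
    change ((c ^ a : Rˣ) : R) * (x * y).coeff a = (rescaleFun c x * rescaleFun c y).coeff a
    rw [coeff_mul, coeff_mul, hA, Finset.mul_sum]
    refine Finset.sum_congr rfl fun ij hij => ?_
    rw [← (Finset.mem_antidiagonal.mp hij).2.2, zpow_add, Units.val_mul]
    simp only [rescaleFun]
    ring
  map_zero' := by ext; simp [rescaleFun]
  map_add' _ _ := by ext; simp [rescaleFun, mul_add]

@[simp]
theorem coeff_rescale (c : Rˣ) (x : HahnSeries ℤ R) (j : ℤ) :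
    (rescale c x).coeff j = ((c ^ j : Rˣ) : R) * x.coeff j :=
  rfl

theorem rescale_single (c : Rˣ) (j : ℤ) (r : R) :
    rescale c (single j r) = single j (((c ^ j : Rˣ) : R) * r) := by
  ext k
  by_cases h : k = j
  · subst h; simp
  · simp [coeff_single_of_ne h]

end Rescale

end HahnSeries

namespace MvRat

variable {F : Type*} [Field F]

theorem ringHom_ext {n : ℕ} {R : Type*} [Semiring R] {f g : MvRat F n →+* R}
    (hC : ∀ a : F, f (algebraMap F _ a) = g (algebraMap F _ a))
    (hX : ∀ i, f (xv i) = g (xv i)) : f = g := by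
  refine IsLocalization.ringHom_ext (nonZeroDivisors _)
    (MvPolynomial.ringHom_ext (fun a => ?_) hX)
  simpa only [RingHom.comp_apply, IsScalarTower.algebraMap_apply F (MvPolynomial (Fin n) F),
    MvPolynomial.algebraMap_eq] using hC a

variable {m : ℕ}

theorem algebraMap_mem_hatField (a : F) :
    algebraMap F (MvRat F (m + 1)) a ∈ hatField F (m + 1) :=
  Subfield.subset_closure (Or.inl ⟨a, rfl⟩)

theorem xv_mem_hatField {i : Fin (m + 1)} (hi : i ≠ 0) : xv i ∈ hatField F (m + 1) :=
  Subfield.subset_closure (Or.inr ⟨i, hi, rfl⟩)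

variable (F m)

def polyLaurentX0 : MvPolynomial (Fin (m + 1)) F →+* LaurentSeries (MvRat F (m + 1)) :=
  (HahnSeries.ofPowerSeries ℤ _).comp <| Polynomial.coeToPowerSeries.ringHom.comp <|
    (Polynomial.mapRingHom ((algebraMap (MvPolynomial (Fin (m + 1)) F) (MvRat F (m + 1))).comp
      (MvPolynomial.rename Fin.succ).toRingHom)).comp (MvPolynomial.finSuccEquiv F m).toRingHom

theorem polyLaurentX0_apply (p : MvPolynomial (Fin (m + 1)) F) :
    polyLaurentX0 F m p = HahnSeries.ofPowerSeries ℤ _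
      ((MvPolynomial.finSuccEquiv F m p).map
        ((algebraMap (MvPolynomial (Fin (m + 1)) F) (MvRat F (m + 1))).comp
          (MvPolynomial.rename Fin.succ).toRingHom) : PowerSeries (MvRat F (m + 1))) :=
  rfl

theorem polyLaurentX0_injective : Function.Injective (polyLaurentX0 F m) := by
  have hcoeff : Function.Injective
      ((algebraMap (MvPolynomial (Fin (m + 1)) F) (MvRat F (m + 1))).comp
        (MvPolynomial.rename Fin.succ).toRingHom) :=
    (IsFractionRing.injective _ _).comp (MvPolynomial.rename_injective _ (Fin.succ_injective m))
  intro p p' h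
  rw [polyLaurentX0_apply, polyLaurentX0_apply] at h
  exact (MvPolynomial.finSuccEquiv F m).injective <| Polynomial.map_injective _ hcoeff <|
    Polynomial.coe_injective _ (HahnSeries.ofPowerSeries_injective h)

/-- The Laurent expansion in `x₁`. Its coefficients are kept in `F(x)` itself (they lie in
`hatField`), which spares a separate copy of `F(x₂, …, xₙ)`. -/
def laurentX0 : MvRat F (m + 1) →+* LaurentSeries (MvRat F (m + 1)) :=
  IsFractionRing.lift (polyLaurentX0_injective F m)

def coeffX0 (ν : ℤ) : MvRat F (m + 1) →+ MvRat F (m + 1) :=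
  (HahnSeries.coeff.addMonoidHom ν).comp (laurentX0 F m).toAddMonoidHom

variable {F m}

theorem coeffX0_apply (ν : ℤ) (u : MvRat F (m + 1)) :
    coeffX0 F m ν u = (laurentX0 F m u).coeff ν :=
  rfl

theorem laurentX0_algebraMap (a : F) :
    laurentX0 F m (algebraMap F _ a) = HahnSeries.C (algebraMap F _ a) := by
  rw [IsScalarTower.algebraMap_apply F (MvPolynomial (Fin (m + 1)) F), laurentX0,
    IsFractionRing.lift_algebraMap, polyLaurentX0_apply, AlgEquiv.commutes,
    Polynomial.algebraMap_apply, Polynomial.map_C, Polynomial.coe_C, HahnSeries.ofPowerSeries_C,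
    RingHom.comp_apply, AlgHom.toRingHom_eq_coe, RingHom.coe_coe, AlgHom.commutes,
    ← IsScalarTower.algebraMap_apply]

theorem laurentX0_xv_zero : laurentX0 F m (xv 0) = HahnSeries.single 1 1 := by
  rw [xv, laurentX0, IsFractionRing.lift_algebraMap, polyLaurentX0_apply,
    MvPolynomial.finSuccEquiv_X_zero, Polynomial.map_X, Polynomial.coe_X,
    HahnSeries.ofPowerSeries_X]

theorem laurentX0_xv_succ (j : Fin m) :
    laurentX0 F m (xv j.succ) = HahnSeries.C (xv j.succ) := by
  rw [xv, laurentX0, IsFractionRing.lift_algebraMap, polyLaurentX0_apply,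
    MvPolynomial.finSuccEquiv_X_succ, Polynomial.map_C, Polynomial.coe_C,
    HahnSeries.ofPowerSeries_C, RingHom.comp_apply, AlgHom.toRingHom_eq_coe, RingHom.coe_coe,
    MvPolynomial.rename_X]

theorem laurentX0_of_mem_hatField {y : MvRat F (m + 1)} (hy : y ∈ hatField F (m + 1)) :
    laurentX0 F m y = HahnSeries.C y := by
  refine RingHom.eqOn_field_closure ?_ hy
  rintro _ (⟨a, rfl⟩ | ⟨i, hi, rfl⟩)
  · exact laurentX0_algebraMap a
  · obtain ⟨j, rfl⟩ := Fin.exists_succ_eq.mpr hi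
    exact laurentX0_xv_succ j

theorem coeffX0_mul_xv_zero_zpow {h : MvRat F (m + 1)} (hh : h ∈ hatField F (m + 1)) (ν : ℤ) :
    coeffX0 F m ν (h * xv 0 ^ ν) = h := by
  rw [coeffX0_apply, map_mul, map_zpow₀, laurentX0_of_mem_hatField hh, laurentX0_xv_zero,
    ← RatFunc.single_zpow, HahnSeries.C_mul_eq_smul, HahnSeries.coeff_smul,
    HahnSeries.coeff_single_same, smul_eq_mul, mul_one]

section Conjugation

variable (σ : MvRat F (m + 1) ≃ₐ[F] MvRat F (m + 1))

theorem laurentX0_map_of_scales_xv_zero {q : F} (hq : q ≠ 0)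
    (h0 : σ (xv 0) = algebraMap F _ q * xv 0) (hσ : ∀ j : Fin m, σ (xv j.succ) = xv j.succ)
    (u : MvRat F (m + 1)) :
    laurentX0 F m (σ u) =
      HahnSeries.rescale (Units.mk0 (algebraMap F _ q) (by simpa using hq)) (laurentX0 F m u) := by
  refine RingHom.congr_fun (f := (laurentX0 F m).comp σ.toRingHom)
    (g := (HahnSeries.rescale _).comp (laurentX0 F m))
    (ringHom_ext (fun a => ?_) (Fin.cases ?_ fun j => ?_)) u
  · simp [laurentX0_algebraMap, HahnSeries.rescale_single]
  · simp [h0, laurentX0_algebraMap, laurentX0_xv_zero, HahnSeries.rescale_single]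
  · simp [hσ, laurentX0_xv_succ, HahnSeries.rescale_single]

theorem laurentX0_map_of_fixes_xv_zero (h0 : σ (xv 0) = xv 0)
    (hσ : ∀ j : Fin m, σ (xv j.succ) ∈ hatField F (m + 1)) (u : MvRat F (m + 1)) :
    laurentX0 F m (σ u) =
      HahnSeries.mapRingHom (σ : MvRat F (m + 1) →+* MvRat F (m + 1)) (laurentX0 F m u) := by
  refine RingHom.congr_fun (f := (laurentX0 F m).comp σ.toRingHom)
    (g := (HahnSeries.mapRingHom _).comp (laurentX0 F m))
    (ringHom_ext (fun a => ?_) (Fin.cases ?_ fun j => ?_)) u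
  · simp [laurentX0_algebraMap, HahnSeries.mapRingHom_single]
  · simp [h0, laurentX0_xv_zero, HahnSeries.mapRingHom_single]
  · simp [laurentX0_of_mem_hatField (hσ j), laurentX0_xv_succ, HahnSeries.mapRingHom_single]

theorem coeffX0_sub_eq_zero_of_scales_xv_zero {q : F} (hq : q ≠ 0)
    (h0 : σ (xv 0) = algebraMap F _ q * xv 0) (hσ : ∀ j : Fin m, σ (xv j.succ) = xv j.succ)
    (ν : ℤ) (u : MvRat F (m + 1)) :
    coeffX0 F m ν (algebraMap F _ (q ^ (-ν)) * σ u - u) = 0 := by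
  rw [map_sub, sub_eq_zero, coeffX0_apply, coeffX0_apply, map_mul, laurentX0_algebraMap,
    laurentX0_map_of_scales_xv_zero σ hq h0 hσ, HahnSeries.C_mul_eq_smul,
    HahnSeries.coeff_smul, HahnSeries.coeff_rescale, smul_eq_mul, ← mul_assoc,
    Units.val_zpow_eq_zpow_val, Units.val_mk0, ← map_zpow₀, ← map_mul, ← zpow_add₀ hq,
    neg_add_cancel, zpow_zero, map_one, one_mul]

theorem coeffX0_sub_of_fixes_xv_zero (h0 : σ (xv 0) = xv 0)
    (hσ : ∀ j : Fin m, σ (xv j.succ) ∈ hatField F (m + 1)) (c : F) (ν : ℤ)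
    (u : MvRat F (m + 1)) :
    coeffX0 F m ν (algebraMap F _ c * σ u - u) =
      algebraMap F _ c * σ (coeffX0 F m ν u) - coeffX0 F m ν u := by
  rw [map_sub, coeffX0_apply, coeffX0_apply, map_mul, laurentX0_algebraMap,
    laurentX0_map_of_fixes_xv_zero σ h0 hσ, HahnSeries.C_mul_eq_smul, HahnSeries.coeff_smul,
    HahnSeries.coeff_mapRingHom, smul_eq_mul, RingHom.coe_coe]

end Conjugation

end MvRat

end

theorem stmt_3_general {F : Type*} [Field F] {n : ℕ} [NeZero n]
    (q : F) (hq0 : q ≠ 0)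
    (θ : Fin n → (MvRat F n ≃ₐ[F] MvRat F n))
    (hθfix : ∀ i l : Fin n, i ≠ l → θ i (xv l) = xv l)
    (hθ0 : θ 0 (xv 0) = algebraMap F (MvRat F n) q * xv 0)
    (hθ : ∀ i : Fin n, i ≠ 0 →
      θ i (xv i) = xv i + 1 ∨ θ i (xv i) = algebraMap F (MvRat F n) q * xv i)
    (c : Fin n → F)
    (ν : ℤ) (f g fν : MvRat F n)
    (hfν : ∃ h ∈ hatField F n, fν = h * xv 0 ^ ν)
    (hdecomp : f = algebraMap F (MvRat F n) (q ^ (-ν)) * θ 0 g - g + fν) :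
    (∃ g' : Fin n → MvRat F n,
        f = (algebraMap F (MvRat F n) (q ^ (-ν)) * θ 0 (g' 0) - g' 0) +
          ∑ i ∈ Finset.univ.erase (0 : Fin n),
            (algebraMap F (MvRat F n) (c i) * θ i (g' i) - g' i)) ↔
    (∃ g' : Fin n → MvRat F n,
        fν = ∑ i ∈ Finset.univ.erase (0 : Fin n),
          (algebraMap F (MvRat F n) (c i) * θ i (g' i) - g' i)) := by
  obtain ⟨m, rfl⟩ := Nat.exists_eq_succ_of_ne_zero (NeZero.ne n)
  open MvRat in
  constructor
  · rintro ⟨g', hsum⟩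
    obtain ⟨h, hh, rfl⟩ := hfν
    have hθ0_succ (j : Fin m) : θ 0 (xv j.succ) = xv j.succ :=
      hθfix 0 j.succ (Fin.succ_ne_zero j).symm
    have hθ_hat {i : Fin (m + 1)} (hi : i ≠ 0) (j : Fin m) :
        θ i (xv j.succ) ∈ hatField F (m + 1) := by
      rcases eq_or_ne i j.succ with rfl | hij
      · rcases hθ _ hi with h | h <;> rw [h]
        · exact add_mem (xv_mem_hatField hi) (one_mem _)
        · exact mul_mem (algebraMap_mem_hatField q) (xv_mem_hatField hi)
      · rw [hθfix i j.succ hij]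
        exact xv_mem_hatField (Fin.succ_ne_zero j)
    have hcoeff : h = ∑ i ∈ Finset.univ.erase (0 : Fin (m + 1)),
        (algebraMap F _ (c i) * θ i (coeffX0 F m ν (g' i)) - coeffX0 F m ν (g' i)) := by
      have := congrArg (coeffX0 F m ν) (hsum.symm.trans hdecomp)
      rwa [map_add, map_add, map_sum, coeffX0_mul_xv_zero_zpow hh,
        coeffX0_sub_eq_zero_of_scales_xv_zero _ hq0 hθ0 hθ0_succ,
        coeffX0_sub_eq_zero_of_scales_xv_zero _ hq0 hθ0 hθ0_succ, zero_add, zero_add,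
        Finset.sum_congr rfl fun i hi => coeffX0_sub_of_fixes_xv_zero (θ i)
          (hθfix i 0 (Finset.ne_of_mem_erase hi)) (hθ_hat (Finset.ne_of_mem_erase hi)) _ _ _,
        eq_comm] at this
    refine ⟨fun i => coeffX0 F m ν (g' i) * xv 0 ^ ν, ?_⟩
    rw [hcoeff, Finset.sum_mul]
    refine Finset.sum_congr rfl fun i hi => ?_
    rw [map_mul, map_zpow₀, hθfix i 0 (Finset.ne_of_mem_erase hi), sub_mul, mul_assoc]
  · rintro ⟨g', hsum⟩
    refine ⟨Function.update g' 0 g, ?_⟩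
    rw [Function.update_self, hdecomp, hsum]
    congr 1
    exact Finset.sum_congr rfl fun i hi => by
      rw [Function.update_of_ne (Finset.ne_of_mem_erase hi)]

set_option maxHeartbeats 1000000 in
/-- **Proposition: q-summability of Laurent polynomials, special case.**
Suppose `θ_{x₁} = τ_{q,x₁}`, let `ν ∈ ℤ`, and let `f ∈ F(x̂₁)[x₁,x₁⁻¹]` be written as
`f = q^{−ν}τ_{q,x₁}(g) − g + f_ν` with `g ∈ F(x̂₁)[x₁,x₁⁻¹]` and `f_ν ∈ W_ν`. Let the
remaining operators carry nonzero constants `c₂,…,cₙ`. Then `f` is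
`(q^{−ν}τ_{q,x₁}, c₂θ_{x₂},…,cₙθ_{xₙ})`-summable in `F(x)` iff `f_ν` is
`(c₂θ_{x₂},…,cₙθ_{xₙ})`-summable in `F(x)`. -/
theorem stmt_3 {F : Type*} [Field F] [CharZero F] {n : ℕ} [NeZero n]
    (q : F) (hq0 : q ≠ 0) (hq : ∀ m : ℤ, m ≠ 0 → q ^ m ≠ 1)
    (θ : Fin n → (MvRat F n ≃ₐ[F] MvRat F n))
    (hθfix : ∀ i l : Fin n, i ≠ l → θ i (xv l) = xv l)
    (hθ0 : θ 0 (xv 0) = algebraMap F (MvRat F n) q * xv 0)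
    (hθ : ∀ i : Fin n, i ≠ 0 →
      θ i (xv i) = xv i + 1 ∨ θ i (xv i) = algebraMap F (MvRat F n) q * xv i)
    (c : Fin n → F) (hc : ∀ i, c i ≠ 0)
    (ν : ℤ) (f g fν : MvRat F n)
    (hfL : IsLaurent (hatField F n) (xv 0) f)
    (hgL : IsLaurent (hatField F n) (xv 0) g)
    (hfν : ∃ h ∈ hatField F n, fν = h * xv 0 ^ ν)
    (hdecomp : f = algebraMap F (MvRat F n) (q ^ (-ν)) * θ 0 g - g + fν) :
    (∃ g' : Fin n → MvRat F n,
        f = (algebraMap F (MvRat F n) (q ^ (-ν)) * θ 0 (g' 0) - g' 0) +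
          ∑ i ∈ Finset.univ.erase (0 : Fin n),
            (algebraMap F (MvRat F n) (c i) * θ i (g' i) - g' i)) ↔
    (∃ g' : Fin n → MvRat F n,
        fν = ∑ i ∈ Finset.univ.erase (0 : Fin n),
          (algebraMap F (MvRat F n) (c i) * θ i (g' i) - g' i)) :=
  stmt_3_general q hq0 θ hθfix hθ0 hθ c ν f g fν hfν hdecomp
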